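/- arXiv:2209.03044 — 5 statements merged into one kernel-verified Lean document; each statement's English description precedes it below -/
import Mathlib

section
/- Let n ≥ m ≥ 1, let p : Fin m → Fin n → ℤ be an integer exponent matrix whose m rows are linearly independent over ℚ, and let α : Fin m → ℂˣ. Let A be the toric arrangement with subtori H i = {z : Fin n → ℂˣ | ∏ j, (z j) ^ (p i j) = α i}. Then there exist an integer matrix q : Fin m → Fin n → ℤ and a homeomorphism φ : (Fin n → ℂˣ) ≃ₜ (Fin n → ℂˣ) such that for every i : Fin m, the image φ '' (H i) equals the centered subtorus {t : Fin n → ℂˣ | ∏ j, (t j) ^ (q i j) = 1}. -/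
/-!
Translation `z ↦ z * β` carries the subtorus `{z | ∏ j, z j ^ p i j = α i}` onto
`{z | ∏ j, z j ^ p i j = α i * ∏ j, β j ^ p i j}`, so it suffices to find `β` with
`∏ j, β j ^ p i j = (α i)⁻¹` for all `i`, i.e. to show that the characters `z ↦ ∏ j, z j ^ p i j`
jointly map `(ℂˣ)ⁿ` onto `(ℂˣ)ᵐ`. Writing `β = exp x` this becomes a linear system
`∑ j, p i j * x j = c i` over `ℂ`, solvable because an integer matrix with `ℚ`-independent rows
has a rational right inverse.
-/

open Matrix

theorem Matrix.exists_mul_eq_one_of_linearIndependent_row {m n K : Type*} [Field K] [Fintype m]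
    [DecidableEq m] [Fintype n] {A : Matrix m n K} (hA : LinearIndependent K A.row) :
    ∃ B : Matrix n m K, A * B = 1 := by
  refine mulVec_surjective_iff_exists_right_inverse.mp fun y => ?_
  have hrange : LinearMap.range A.mulVecLin = ⊤ :=
    Submodule.eq_top_of_finrank_eq <| by
      rw [← Matrix.rank, hA.rank_matrix, Module.finrank_fintype_fun_eq_card]
  exact LinearMap.range_eq_top.mp hrange y

theorem Matrix.exists_intCast_mulVec_eq {m n R : Type*} [Fintype m] [Fintype n] [Ring R]
    [Algebra ℚ R] (p : Matrix m n ℤ) (hp : LinearIndependent ℚ (p.map ((↑) : ℤ → ℚ)).row)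
    (c : m → R) : ∃ x : n → R, p.map ((↑) : ℤ → R) *ᵥ x = c := by
  classical
  obtain ⟨B, hB⟩ := exists_mul_eq_one_of_linearIndependent_row hp
  have hB' : p.map ((↑) : ℤ → R) * B.map (algebraMap ℚ R) = 1 := by
    have hcast : p.map ((↑) : ℤ → R) = (p.map ((↑) : ℤ → ℚ)).map (algebraMap ℚ R) := by
      ext; simp
    rw [hcast, ← Matrix.map_mul, hB, Matrix.map_one _ (map_zero _) (map_one _)]
  exact ⟨B.map (algebraMap ℚ R) *ᵥ c, by rw [mulVec_mulVec, hB', one_mulVec]⟩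

def toricCharacter {ι G : Type*} [Fintype ι] [CommGroup G] (k : ι → ℤ) : (ι → G) →* G where
  toFun z := ∏ j, z j ^ k j
  map_one' := by simp
  map_mul' z w := by simp only [Pi.mul_apply, mul_zpow, Finset.prod_mul_distrib]

theorem MonoidHom.image_mul_right_setOf_eq {G H : Type*} [Group G] [Group H] (f : G →* H)
    (a : H) (b : G) : (· * b) '' {x | f x = a} = {x | f x = a * f b} := by
  ext x
  simp [Set.image_mul_right, mul_inv_eq_iff_eq_mul]

theorem toricCharacter_exp {ι : Type*} [Fintype ι] (k : ι → ℤ) (x : ι → ℂ) :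
    ((toricCharacter k : (ι → ℂˣ) →* ℂˣ)
        fun j => Units.mk0 (Complex.exp (x j)) (Complex.exp_ne_zero _) : ℂ) =
      Complex.exp (∑ j, k j * x j) := by
  simp [toricCharacter, Complex.exp_sum, Complex.exp_int_mul]

theorem surjective_toricCharacter_pi {ι κ : Type*} [Fintype ι] [Fintype κ] (p : κ → ι → ℤ)
    (hp : LinearIndependent ℚ (fun i j => (p i j : ℚ))) :
    Function.Surjective fun (z : ι → ℂˣ) i => toricCharacter (p i) z := by
  intro α
  obtain ⟨x, hx⟩ := exists_intCast_mulVec_eq (Matrix.of p) hp fun i => Complex.log (α i)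
  refine ⟨fun j => Units.mk0 (Complex.exp (x j)) (Complex.exp_ne_zero _), funext fun i => ?_⟩
  ext
  have hxi := congrFun hx i
  simp only [mulVec, dotProduct, map_apply, of_apply] at hxi
  rw [toricCharacter_exp, hxi, Complex.exp_log (α i).ne_zero]

theorem maximal_rank_toric_arrangement_centered_general
    (n m : ℕ)
    (p : Fin m → Fin n → ℤ)
    (hp : LinearIndependent ℚ (fun i : Fin m => fun j : Fin n => (p i j : ℚ)))
    (α : Fin m → ℂˣ) :
    ∃ (q : Fin m → Fin n → ℤ) (φ : (Fin n → ℂˣ) ≃ₜ (Fin n → ℂˣ)),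
      ∀ i : Fin m,
        φ '' {z : Fin n → ℂˣ | ∏ j, (z j) ^ (p i j) = α i}
          = {t : Fin n → ℂˣ | ∏ j, (t j) ^ (q i j) = 1} := by
  obtain ⟨β, hβ⟩ := surjective_toricCharacter_pi p hp α⁻¹
  refine ⟨p, Homeomorph.mulRight β, fun i => ?_⟩
  have hi := (toricCharacter (p i)).image_mul_right_setOf_eq (α i) β
  have hβi : toricCharacter (p i) β = (α i)⁻¹ := congrFun hβ i
  rw [hβi, mul_inv_cancel] at hi
  exact hi

/-- A toric arrangement in `(ℂˣ)^n` whose associated integer exponent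
matrix has maximal rank (rows linearly independent over `ℚ`) can be mapped by a
homeomorphism of `(ℂˣ)^n` onto a centered toric arrangement. -/
theorem maximal_rank_toric_arrangement_centered
    (n m : ℕ) (hm : 1 ≤ m) (hmn : m ≤ n)
    (p : Fin m → Fin n → ℤ)
    (hp : LinearIndependent ℚ (fun i : Fin m => fun j : Fin n => (p i j : ℚ)))
    (α : Fin m → ℂˣ) :
    ∃ (q : Fin m → Fin n → ℤ) (φ : (Fin n → ℂˣ) ≃ₜ (Fin n → ℂˣ)),
      ∀ i : Fin m,
        φ '' {z : Fin n → ℂˣ | ∏ j, (z j) ^ (p i j) = α i}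
          = {t : Fin n → ℂˣ | ∏ j, (t j) ^ (q i j) = 1} :=
  maximal_rank_toric_arrangement_centered_general n m p hp α
end

section
/- Let n ≥ m ≥ 1, let p : Fin m → Fin n → ℤ have rows linearly independent over ℚ, and let α : Fin m → ℂˣ. Let H i = {z : Fin n → ℂˣ | ∏ j, (z j) ^ (p i j) = α i} and let M(A) = (Fin n → ℂˣ) \ ⋃ i, H i be the complement. Then there exists a centered toric arrangement, i.e. an integer matrix q : Fin m → Fin n → ℤ with subtori T i = {t : Fin n → ℂˣ | ∏ j, (t j) ^ (q i j) = 1}, such that M(A) is homeomorphic to the complement M(B) = (Fin n → ℂˣ) \ ⋃ i, T i. -/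
/-!
Write `χ_p : (ℂˣ)ⁿ → (ℂˣ)ᵐ`, `z ↦ (∏ j, z j ^ p i j)ᵢ`, for the monomial map of `p`; both complements
are preimages under `χ_p`, of `{w | ∀ i, w i ≠ α i}` and of `{w | ∀ i, w i ≠ 1}`. Rows independent
over `ℚ` stay independent over `ℂ`, so taking logarithms shows that `χ_p` is surjective. If
`χ_p a = α`, left translation by `a` carries the second preimage onto the first, so `q = p` works.
-/

open scoped Pointwise

theorem Matrix.mulVec_surjective_of_linearIndependent_rows {m n K : Type*} [Field K]
    [Fintype m] [Fintype n] {A : Matrix m n K} (h : LinearIndependent K A.row) :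
    Function.Surjective A.mulVec := by
  have hrank : Module.finrank K (LinearMap.range A.mulVecLin) = Module.finrank K (m → K) := by
    rw [← Matrix.rank, h.rank_matrix, Module.finrank_fintype_fun_eq_card]
  exact LinearMap.range_eq_top.mp (Submodule.eq_top_of_finrank_eq hrank)

theorem smul_setOf_forall_ne_one {ι G : Type*} [Group G] (α : ι → G) :
    α • {w : ι → G | ∀ i, w i ≠ 1} = {w | ∀ i, w i ≠ α i} := by
  ext w
  simp [Set.mem_smul_set_iff_inv_smul_mem, inv_mul_eq_one, eq_comm]

section Translation

variable {G H : Type*} [Group G] [Group H]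

theorem MonoidHom.image_mulLeft_preimage (χ : G →* H) (a : G) (S : Set H) :
    (a * ·) '' (χ ⁻¹' S) = χ ⁻¹' (χ a • S) := by
  ext z
  simp [Set.mem_smul_set_iff_inv_smul_mem, Set.image_mul_left]

def MonoidHom.preimageHomeomorphPreimageSMul [TopologicalSpace G] [ContinuousMul G]
    (χ : G →* H) (a : G) (S : Set H) : χ ⁻¹' S ≃ₜ χ ⁻¹' (χ a • S) :=
  ((Homeomorph.mulLeft a).image _).trans (.setCongr (χ.image_mulLeft_preimage a S))

end Translation

section Monomial

variable {ι κ : Type*} [Fintype κ]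

def monomialHom (G : Type*) [CommGroup G] (p : ι → κ → ℤ) : (κ → G) →* (ι → G) where
  toFun z i := ∏ j, z j ^ p i j
  map_one' := by ext; simp
  map_mul' z w := by ext; simp [mul_zpow, Finset.prod_mul_distrib]

theorem diff_iUnion_monomial_eq_preimage {G : Type*} [CommGroup G] (p : ι → κ → ℤ)
    (α : ι → G) :
    Set.univ \ ⋃ i, {z : κ → G | ∏ j, z j ^ p i j = α i} =
      monomialHom G p ⁻¹' {w | ∀ i, w i ≠ α i} := by
  ext z
  simp [monomialHom]

theorem monomialHom_surjective [Fintype ι] (p : ι → κ → ℤ)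
    (hp : LinearIndependent ℚ fun i j => (p i j : ℚ)) :
    Function.Surjective (monomialHom ℂˣ p) := by
  intro α
  have hpℤ : LinearIndependent ℤ p :=
    (linearIndependent_algebraMap_comp_iff (R := ℤ) (S := ℚ)).1 hp
  have hpℂ : LinearIndependent ℂ (Matrix.of fun i j => (p i j : ℂ)).row :=
    (linearIndependent_algebraMap_comp_iff (R := ℤ) (S := ℂ)).2 hpℤ
  obtain ⟨b, hb⟩ := Matrix.mulVec_surjective_of_linearIndependent_rows hpℂ
    fun i => Complex.log (α i)
  refine ⟨fun j => Units.mk0 (Complex.exp (b j)) (Complex.exp_ne_zero _), funext fun i => ?_⟩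
  ext
  calc ((∏ j, Units.mk0 (Complex.exp (b j)) _ ^ p i j : ℂˣ) : ℂ)
      = Complex.exp (∑ j, p i j * b j) := by
        simp [Complex.exp_sum, Complex.exp_int_mul]
    _ = α i := by
        rw [← Complex.exp_log (α i).ne_zero]
        exact congrArg Complex.exp (congrFun hb i)

end Monomial

theorem complement_homeomorphic_centered_general
    (n m : ℕ)
    (p : Fin m → Fin n → ℤ)
    (hp : LinearIndependent ℚ (fun i : Fin m => fun j : Fin n => (p i j : ℚ)))
    (α : Fin m → ℂˣ) :
    ∃ q : Fin m → Fin n → ℤ,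
      Nonempty
        ((↥((Set.univ : Set (Fin n → ℂˣ)) \
            ⋃ i : Fin m, {z : Fin n → ℂˣ | ∏ j, (z j) ^ (p i j) = α i})) ≃ₜ
         (↥((Set.univ : Set (Fin n → ℂˣ)) \
            ⋃ i : Fin m, {t : Fin n → ℂˣ | ∏ j, (t j) ^ (q i j) = 1}))) := by
  obtain ⟨a, rfl⟩ := monomialHom_surjective p hp α
  refine ⟨p, ⟨?_⟩⟩
  rw [diff_iUnion_monomial_eq_preimage, diff_iUnion_monomial_eq_preimage,
    ← smul_setOf_forall_ne_one]
  exact ((monomialHom ℂˣ p).preimageHomeomorphPreimageSMul a _).symm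

/-- The complement of a toric arrangement whose associated matrix has
maximal rank is homeomorphic to the complement of a centered toric arrangement. -/
theorem complement_homeomorphic_centered
    (n m : ℕ) (hm : 1 ≤ m) (hmn : m ≤ n)
    (p : Fin m → Fin n → ℤ)
    (hp : LinearIndependent ℚ (fun i : Fin m => fun j : Fin n => (p i j : ℚ)))
    (α : Fin m → ℂˣ) :
    ∃ q : Fin m → Fin n → ℤ,
      Nonempty
        ((↥((Set.univ : Set (Fin n → ℂˣ)) \
            ⋃ i : Fin m, {z : Fin n → ℂˣ | ∏ j, (z j) ^ (p i j) = α i})) ≃ₜ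
         (↥((Set.univ : Set (Fin n → ℂˣ)) \
            ⋃ i : Fin m, {t : Fin n → ℂˣ | ∏ j, (t j) ^ (q i j) = 1}))) :=
  complement_homeomorphic_centered_general n m p hp α
end

section
/- Let n ≥ m ≥ 1, let p : Fin m → Fin n → ℤ have rows linearly independent over ℚ, let α : Fin m → ℂˣ, and let H i = {z : Fin n → ℂˣ | ∏ j, (z j) ^ (p i j) = α i}. Then there exist a homeomorphism φ of Fin n → ℂˣ and an integer matrix q : Fin m → Fin n → ℤ such that: (i) for every i, φ '' (H i) = {t : Fin n → ℂˣ | ∏ j, (t j) ^ (q i j) = α i}; (ii) q is in triangular form, meaning q i j = 0 whenever (j : ℕ) < (i : ℕ), and the diagonal entries are nonzero: q i ⟨(i : ℕ), lt_of_lt_of_le i.isLt (by assumption m ≤ n)⟩ ≠ 0 for every i : Fin m. -/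
/-!
Choose a functional `g : ℤⁿ → ℤ` that vanishes on `p 1, …, p (m - 1)` but not on `p 0`; it
exists because `ℤⁿ` modulo the saturation of `span {p 1, …}` is free, and after dividing by a
generator of its image it is surjective. Then `ℤⁿ = ℤ y ⊕ ker g` with `g y = 1`, and induction
inside `ker g` yields a basis `b` of `ℤⁿ` in which `p i` has zero coordinates before `i` and a
nonzero `i`-th coordinate. The matrix with columns `b j` is unimodular, so `t j = z ^ (b j)` is a
homeomorphism of `(ℂˣ)ⁿ`, and it turns `z ^ (p i)` into `t ^ q i` with `q i` the `b`-coordinates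
of `p i`.
-/

open Module
open scoped Matrix

theorem Finset.prod_zpow_eq_zpow_sum {G ι : Type*} [CommGroup G] (s : Finset ι) (f : ι → ℤ)
    (a : G) : ∏ i ∈ s, a ^ f i = a ^ ∑ i ∈ s, f i := by
  induction s using Finset.cons_induction <;> simp [*, zpow_add]

namespace Torus

variable {G : Type*} [CommGroup G] {ι κ μ : Type*} [Fintype ι]

def monomial (z : ι → G) (a : ι → ℤ) : G := ∏ k, z k ^ a k

/-- The change of coordinates `t j = z ^ (j-th column of A)`. -/
def monomialMap (A : Matrix ι κ ℤ) (z : ι → G) : κ → G := fun j => monomial z fun k => A k j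

theorem monomial_monomialMap [Fintype κ] (A : Matrix ι κ ℤ) (z : ι → G) (a : κ → ℤ) :
    monomial (monomialMap A z) a = monomial z (A *ᵥ a) := by
  simp only [monomial, monomialMap, ← Finset.prod_zpow, ← zpow_mul]
  rw [Finset.prod_comm]
  exact Finset.prod_congr rfl fun k _ => Finset.prod_zpow_eq_zpow_sum _ _ _

theorem monomialMap_monomialMap [Fintype κ] (A : Matrix κ μ ℤ) (B : Matrix ι κ ℤ) (z : ι → G) :
    monomialMap A (monomialMap B z) = monomialMap (B * A) z :=
  funext fun _ => monomial_monomialMap B z _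

theorem monomialMap_one [DecidableEq ι] (z : ι → G) : monomialMap (1 : Matrix ι ι ℤ) z = z :=
  funext fun j => by simp [monomialMap, monomial, Matrix.one_apply]

variable [TopologicalSpace G] [IsTopologicalGroup G]

theorem continuous_monomialMap (A : Matrix ι κ ℤ) :
    Continuous (monomialMap A : (ι → G) → κ → G) :=
  continuous_pi fun _ => continuous_finsetProd _ fun k _ => (continuous_apply k).zpow _

variable [DecidableEq ι]

def monomialHomeomorph (A : (Matrix ι ι ℤ)ˣ) : (ι → G) ≃ₜ (ι → G) where
  toFun := monomialMap A
  invFun := monomialMap ↑A⁻¹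
  left_inv z := by rw [monomialMap_monomialMap, Units.mul_inv, monomialMap_one]
  right_inv z := by rw [monomialMap_monomialMap, Units.inv_mul, monomialMap_one]
  continuous_toFun := continuous_monomialMap _
  continuous_invFun := continuous_monomialMap _

theorem image_monomialHomeomorph_setOf (A : (Matrix ι ι ℤ)ˣ) (a : ι → ℤ) (c : G) :
    monomialHomeomorph A '' {z | monomial z (A *ᵥ a) = c} = {t | monomial t a = c} := by
  ext t
  rw [Homeomorph.image_eq_preimage_symm, Set.mem_preimage, Set.mem_ofPred_eq,
    ← monomial_monomialMap]
  exact iff_of_eq (congrArg (monomial · a = c) ((monomialHomeomorph A).apply_symm_apply t))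

end Torus

namespace Module.Basis

variable {R M : Type*} [CommRing R] [AddCommGroup M] [Module R M] {n : ℕ}
  (g : M →ₗ[R] R) {y : M} (hy : g y = 1) (b : Basis (Fin n) R (LinearMap.ker g))

noncomputable def finConsOfKer : Basis (Fin (n + 1)) R M :=
  mkFinCons y b (fun c x hx h => by simpa [hy, LinearMap.mem_ker.1 hx] using congrArg g h)
    (fun z => ⟨-g z, by simp [hy]⟩)

theorem finConsOfKer_zero : finConsOfKer g hy b 0 = y := by simp [finConsOfKer]

theorem finConsOfKer_succ (i : Fin n) : finConsOfKer g hy b i.succ = b i := by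
  simp [finConsOfKer]

theorem finConsOfKer_repr_zero (x : M) : (finConsOfKer g hy b).repr x 0 = g x := by
  have hcoord : (finConsOfKer g hy b).coord 0 = g := (finConsOfKer g hy b).ext fun i => by
    rw [coord_apply, repr_self]
    cases i using Fin.cases with
    | zero => rw [Finsupp.single_eq_same, finConsOfKer_zero, hy]
    | succ i =>
      rw [Finsupp.single_eq_of_ne (Fin.succ_ne_zero i).symm, finConsOfKer_succ]
      exact ((b i).2 : g (b i) = 0).symm
  rw [← coord_apply, hcoord]

theorem finConsOfKer_repr_succ (x : LinearMap.ker g) (j : Fin n) :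
    (finConsOfKer g hy b).repr x j.succ = b.repr x j := by
  have hcoord : (finConsOfKer g hy b).coord j.succ ∘ₗ (LinearMap.ker g).subtype = b.coord j :=
    b.ext fun i => by simp [← finConsOfKer_succ g hy b, Finsupp.single_apply]
  rw [← coord_apply, ← coord_apply, ← hcoord]
  rfl

end Module.Basis

section PrincipalIdealRing

variable {R M : Type*} [CommRing R] [IsDomain R] [IsPrincipalIdealRing R]
  [AddCommGroup M] [Module R M]

theorem LinearMap.exists_surjective_ker_eq {f : M →ₗ[R] R} (hf : f ≠ 0) :
    ∃ g : M →ₗ[R] R, Function.Surjective g ∧ LinearMap.ker g = LinearMap.ker f := by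
  obtain ⟨d, hd⟩ := Submodule.IsPrincipal.principal (LinearMap.range f)
  have hd0 : d ≠ 0 := by
    rintro rfl
    exact hf (LinearMap.range_eq_bot.1 (by simpa using hd))
  let e := LinearEquiv.toSpanNonzeroSingleton R R d hd0
  let e' := LinearEquiv.ofEq _ _ hd
  let g : M →ₗ[R] R := e.symm.toLinearMap ∘ₗ e'.toLinearMap ∘ₗ f.rangeRestrict
  have hfg (x : M) : f x = g x * d := by
    have h := congrArg Subtype.val (e.apply_symm_apply (e' (f.rangeRestrict x)))
    rw [LinearEquiv.toSpanNonzeroSingleton_apply] at h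
    exact h.symm
  refine ⟨g, e.symm.surjective.comp (e'.surjective.comp f.surjective_rangeRestrict), ?_⟩
  ext x
  simp [hfg, hd0]

theorem Submodule.exists_surjective_dual_le_ker [Module.Finite R M] {N : Submodule R M} {x : M}
    (hx : ∀ r : R, r ≠ 0 → r • x ∉ N) :
    ∃ g : Dual R M, Function.Surjective g ∧ g x ≠ 0 ∧ N ≤ LinearMap.ker g := by
  let π := (torsion R (M ⧸ N)).mkQ ∘ₗ N.mkQ
  have hπx : π x ≠ 0 := by
    intro h
    obtain ⟨r, hr⟩ := (mem_torsion_iff _).1 ((Quotient.mk_eq_zero _).1 h)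
    exact hx r (nonZeroDivisors.ne_zero r.2)
      ((Quotient.mk_eq_zero N).1 (by simpa [Submonoid.smul_def] using hr))
  obtain ⟨f, hf⟩ := Projective.exists_dual_ne_zero R hπx
  obtain ⟨g, hg, hker⟩ :=
    LinearMap.exists_surjective_ker_eq (f := f ∘ₗ π) fun h => hf (by simpa using congrArg (· x) h)
  refine ⟨g, hg, fun h => hf ?_, fun y hy => ?_⟩
  · rw [← LinearMap.comp_apply, ← LinearMap.mem_ker, ← hker]
    exact h
  · rw [hker, LinearMap.mem_ker]
    simp [π, (Quotient.mk_eq_zero N).2 hy]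

theorem LinearIndependent.exists_surjective_dual_fin_succ [Module.Finite R M] {m : ℕ}
    {p : Fin (m + 1) → M} (hp : LinearIndependent R p) :
    ∃ g : Dual R M, Function.Surjective g ∧ g (p 0) ≠ 0 ∧ ∀ i : Fin m, g (p i.succ) = 0 := by
  have hx : ∀ r : R, r ≠ 0 → r • p 0 ∉ Submodule.span R (Set.range (p ∘ Fin.succ)) := by
    intro r hr hmem
    refine hr (hp.eq_zero_of_smul_mem_span 0 r (Submodule.span_mono ?_ hmem))
    rintro _ ⟨i, rfl⟩
    exact ⟨i.succ, by simp [Fin.succ_ne_zero], rfl⟩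
  obtain ⟨g, hg, hg0, hker⟩ := Submodule.exists_surjective_dual_le_ker hx
  exact ⟨g, hg, hg0, fun i => hker (Submodule.subset_span ⟨i, rfl⟩)⟩

theorem exists_basis_repr_triangular [Module.Free R M] [Module.Finite R M] {m : ℕ}
    {p : Fin m → M} (hp : LinearIndependent R p) {n : ℕ} (hn : finrank R M = n) :
    ∃ b : Basis (Fin n) R M, (∀ (i : Fin m) (j : Fin n), (j : ℕ) < i → b.repr (p i) j = 0) ∧
      ∀ (i : Fin m) (j : Fin n), (j : ℕ) = i → b.repr (p i) j ≠ 0 := by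
  induction m generalizing M n with
  | zero => exact ⟨Module.finBasisOfFinrankEq R M hn, fun i => i.elim0, fun i => i.elim0⟩
  | succ m ih =>
    obtain ⟨n, rfl⟩ : ∃ n', n = n' + 1 := by
      have := hp.fintype_card_le_finrank
      exact ⟨n - 1, by simp only [Fintype.card_fin, hn] at this; omega⟩
    obtain ⟨g, hg, hg0, hgsucc⟩ := hp.exists_surjective_dual_fin_succ
    obtain ⟨y, hy⟩ := hg 1
    have hK : finrank R (LinearMap.ker g) = n := by
      have := (LinearMap.ker g).finrank_quotient_add_finrank
      rw [(g.quotKerEquivOfSurjective hg).finrank_eq, finrank_self] at this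
      omega
    let p' : Fin m → LinearMap.ker g := fun i => ⟨p i.succ, hgsucc i⟩
    have hp' : LinearIndependent R p' :=
      LinearIndependent.of_comp (LinearMap.ker g).subtype (hp.comp _ (Fin.succ_injective _))
    obtain ⟨b', hzero, hdiag⟩ := ih hp' hK
    refine ⟨b'.finConsOfKer g hy, fun i j hji => ?_, fun i j hji => ?_⟩
    · cases i using Fin.cases with
      | zero => exact absurd hji (Nat.not_lt_zero _)
      | succ i =>
        cases j using Fin.cases with
        | zero => rw [Basis.finConsOfKer_repr_zero]; exact hgsucc i
        | succ j =>
          exact (Basis.finConsOfKer_repr_succ g hy b' (p' i) j).trans (hzero i j (by simpa using hji))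
    · cases i using Fin.cases with
      | zero => rw [show j = 0 from Fin.ext hji, Basis.finConsOfKer_repr_zero]; exact hg0
      | succ i =>
        cases j using Fin.cases with
        | zero => simp at hji
        | succ j =>
          exact (Basis.finConsOfKer_repr_succ g hy b' (p' i) j).trans_ne (hdiag i j (by simpa using hji))

end PrincipalIdealRing

theorem toric_arrangement_triangular_form_general
    (n m : ℕ) (hmn : m ≤ n)
    (p : Fin m → Fin n → ℤ)
    (hp : LinearIndependent ℚ (fun i : Fin m => fun j : Fin n => (p i j : ℚ)))
    (α : Fin m → ℂˣ) :
    ∃ (φ : (Fin n → ℂˣ) ≃ₜ (Fin n → ℂˣ)) (q : Fin m → Fin n → ℤ),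
      (∀ i : Fin m,
        φ '' {z : Fin n → ℂˣ | ∏ j, (z j) ^ (p i j) = α i}
          = {t : Fin n → ℂˣ | ∏ j, (t j) ^ (q i j) = α i}) ∧
      (∀ (i : Fin m) (j : Fin n), (j : ℕ) < (i : ℕ) → q i j = 0) ∧
      (∀ i : Fin m, q i ⟨(i : ℕ), lt_of_lt_of_le i.isLt hmn⟩ ≠ 0) := by
  have hpℤ : LinearIndependent ℤ p :=
    .of_comp ((Int.castAddHom ℚ).toIntLinearMap.compLeft (Fin n)) (hp.restrict_scalars' ℤ)
  obtain ⟨b, hzero, hdiag⟩ := exists_basis_repr_triangular hpℤ (finrank_fin_fun ℤ)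
  let e := Pi.basisFun ℤ (Fin n)
  let := e.invertibleToMatrix b
  let A : (Matrix (Fin n) (Fin n) ℤ)ˣ := unitOfInvertible (e.toMatrix b)
  have hA (x : Fin n → ℤ) : (A : Matrix (Fin n) (Fin n) ℤ) *ᵥ b.repr x = x :=
    (b.toMatrix_mulVec_repr e x).trans (funext fun j => Pi.basisFun_repr ℤ (Fin n) x j)
  refine ⟨Torus.monomialHomeomorph A, fun i j => b.repr (p i) j, fun i => ?_, hzero,
    fun i => hdiag i _ rfl⟩
  have h := Torus.image_monomialHomeomorph_setOf A (b.repr (p i)) (α i)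
  rwa [hA] at h

/-- Step 2 of the main theorem: after a homeomorphic change of
coordinates of `(ℂˣ)^n`, the exponent matrix of a maximal-rank toric arrangement
can be put in triangular form with nonzero diagonal, keeping the same constants. -/
theorem toric_arrangement_triangular_form
    (n m : ℕ) (hm : 1 ≤ m) (hmn : m ≤ n)
    (p : Fin m → Fin n → ℤ)
    (hp : LinearIndependent ℚ (fun i : Fin m => fun j : Fin n => (p i j : ℚ)))
    (α : Fin m → ℂˣ) :
    ∃ (φ : (Fin n → ℂˣ) ≃ₜ (Fin n → ℂˣ)) (q : Fin m → Fin n → ℤ),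
      (∀ i : Fin m,
        φ '' {z : Fin n → ℂˣ | ∏ j, (z j) ^ (p i j) = α i}
          = {t : Fin n → ℂˣ | ∏ j, (t j) ^ (q i j) = α i}) ∧
      (∀ (i : Fin m) (j : Fin n), (j : ℕ) < (i : ℕ) → q i j = 0) ∧
      (∀ i : Fin m, q i ⟨(i : ℕ), lt_of_lt_of_le i.isLt hmn⟩ ≠ 0) :=
  toric_arrangement_triangular_form_general n m hmn p hp α
end

section
/- Let n ≥ m ≥ 1 and let q : Fin m → Fin n → ℤ be an integer matrix in triangular form: q i j = 0 whenever (j : ℕ) < (i : ℕ), and q i ⟨(i : ℕ), lt_of_lt_of_le i.isLt (by assumption m ≤ n)⟩ ≠ 0 for every i : Fin m. Then for every α : Fin m → ℂˣ there exists w : Fin n → ℂˣ such that ∏ j, (w j) ^ (q i j) = α i for every i : Fin m. -/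
theorem Units.pow_surjective_of_isAlgClosed {K : Type*} [Field K] [IsAlgClosed K] {k : ℕ}
    (hk : k ≠ 0) : Function.Surjective fun u : Kˣ => u ^ k := by
  intro a
  obtain ⟨z, hz⟩ := IsAlgClosed.exists_pow_nat_eq (a : K) (Nat.pos_of_ne_zero hk)
  have hz0 : z ≠ 0 := by
    rintro rfl
    exact a.ne_zero (by rw [← hz, zero_pow hk])
  exact ⟨Units.mk0 z hz0, Units.ext hz⟩

noncomputable instance Units.rootableByInt_of_isAlgClosed {K : Type*} [Field K] [IsAlgClosed K] :
    RootableBy Kˣ ℤ :=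
  letI := rootableByOfPowLeftSurj Kˣ ℕ Units.pow_surjective_of_isAlgClosed
  Group.rootableByIntOfRootableByNat Kˣ

theorem exists_prod_zpow_eq_of_triangular {G : Type*} [CommGroup G] [RootableBy G ℤ] {m n : ℕ}
    (hmn : m ≤ n) (q : Fin m → Fin n → ℤ)
    (htri : ∀ (i : Fin m) (j : Fin n), (j : ℕ) < i → q i j = 0)
    (hdiag : ∀ i, q i (Fin.castLE hmn i) ≠ 0) (α : Fin m → G) :
    ∃ w : Fin n → G, ∀ i, ∏ j, w j ^ q i j = α i := by
  induction m generalizing n with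
  | zero => exact ⟨1, fun i => i.elim0⟩
  | succ m ih =>
    obtain _ | n := n
    · omega
    obtain ⟨w, hw⟩ := ih (Nat.le_of_succ_le_succ hmn) (fun i j => q i.succ j.succ)
      (fun i j h => htri i.succ j.succ (by simpa using h)) (fun i => hdiag i.succ)
      (fun i => α i.succ)
    -- by triangularity `w 0` occurs only in row `0`, so it is a `q 0 0`-th root fixed by the rest
    obtain ⟨b, hb⟩ :=
      RootableBy.surjective_pow G ℤ (hdiag 0) (α 0 * (∏ j, w j ^ q 0 j.succ)⁻¹)
    refine ⟨Fin.cons b w, Fin.cases ?_ fun i => ?_⟩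
    · simp only [Fin.prod_univ_succ, Fin.cons_zero, Fin.cons_succ]
      exact eq_mul_inv_iff_mul_eq.mp hb
    · rw [Fin.prod_univ_succ, htri i.succ 0 i.succ_pos, zpow_zero, one_mul]
      simpa only [Fin.cons_succ] using hw i

theorem triangular_constants_realizable_general
    (n m : ℕ) (hmn : m ≤ n)
    (q : Fin m → Fin n → ℤ)
    (htri : ∀ (i : Fin m) (j : Fin n), (j : ℕ) < (i : ℕ) → q i j = 0)
    (hdiag : ∀ i : Fin m, q i ⟨(i : ℕ), lt_of_lt_of_le i.isLt hmn⟩ ≠ 0) :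
    ∀ α : Fin m → ℂˣ, ∃ w : Fin n → ℂˣ, ∀ i : Fin m, ∏ j, (w j) ^ (q i j) = α i :=
  exists_prod_zpow_eq_of_triangular hmn q htri hdiag

/-- the recursion of Step 3: for a triangular integer exponent matrix
with nonzero diagonal, every system of constants is realized by a single point. -/
theorem triangular_constants_realizable
    (n m : ℕ) (hm : 1 ≤ m) (hmn : m ≤ n)
    (q : Fin m → Fin n → ℤ)
    (htri : ∀ (i : Fin m) (j : Fin n), (j : ℕ) < (i : ℕ) → q i j = 0)
    (hdiag : ∀ i : Fin m, q i ⟨(i : ℕ), lt_of_lt_of_le i.isLt hmn⟩ ≠ 0) :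
    ∀ α : Fin m → ℂˣ, ∃ w : Fin n → ℂˣ, ∀ i : Fin m, ∏ j, (w j) ^ (q i j) = α i :=
  triangular_constants_realizable_general n m hmn q htri hdiag
end

section
/- Let n ≥ m ≥ 1 and let q : Fin m → Fin n → ℤ be an integer matrix whose m rows are linearly independent over ℚ. Then the group homomorphism χ : (Fin n → ℂˣ) → (Fin m → ℂˣ) defined by (χ w) i = ∏ j, (w j) ^ (q i j) is surjective. -/
/-!
A divisible abelian group such as `ℂˣ` is an injective `ℤ`-module (Baer's criterion). Independence
of the rows of `q` makes `v ↦ ∑ i, v i • q i` an embedding `ℤ^m ↪ ℤ^n`. A target `z` is the same as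
the homomorphism `ℤ^m → ℂˣ` sending the `i`-th basis vector to `z i`; extending it along the
embedding to `ℤ^n → ℂˣ`, the images of the basis vectors of `ℤ^n` form a preimage of `z`.
-/

theorem LinearIndependent.of_intCast_rat {ι κ : Type*} {q : ι → κ → ℤ}
    (hq : LinearIndependent ℚ fun i j => (q i j : ℚ)) : LinearIndependent ℤ q :=
  (hq.restrict_scalars' ℤ).of_comp (LinearMap.compLeft (Int.castAddHom ℚ).toIntLinearMap κ)

theorem DivisibleBy.surjective_sum_zsmul {ι κ A : Type*} [Fintype ι] [Fintype κ]
    [AddCommGroup A] [DivisibleBy A ℤ] {q : ι → κ → ℤ} (hq : LinearIndependent ℤ q) :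
    Function.Surjective fun (w : κ → A) i => ∑ j, q i j • w j := by
  classical
  intro z
  obtain ⟨g, hg⟩ := (Module.Baer.of_divisible A).extension_property
    (Fintype.linearCombination ℤ q) hq.fintypeLinearCombination_injective
    (Fintype.linearCombination ℤ z)
  refine ⟨fun j => g (Pi.single j 1), funext fun i => ?_⟩
  calc ∑ j, q i j • g (Pi.single j 1)
      = g (q i) := by
        conv_rhs => rw [pi_eq_sum_univ' (q i), map_sum]
        simp only [map_zsmul]
    _ = g (Fintype.linearCombination ℤ q (Pi.single i 1)) := by
      rw [Fintype.linearCombination_apply_single, one_smul]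
    _ = z i := by
      rw [← LinearMap.comp_apply, hg, Fintype.linearCombination_apply_single, one_smul]

theorem IsAlgClosed.zpow_surjective_units {K : Type*} [Field K] [IsAlgClosed K] {n : ℤ}
    (hn : n ≠ 0) : Function.Surjective fun u : Kˣ => u ^ n := by
  obtain ⟨k, rfl | rfl⟩ := Int.eq_nat_or_neg n <;> intro u
  all_goals
    obtain ⟨z, hz⟩ := IsAlgClosed.exists_pow_nat_eq (u : K) (by omega : 0 < k)
    have hz0 : z ≠ 0 := by
      rintro rfl
      exact u.ne_zero (by simp_all)
  · exact ⟨Units.mk0 z hz0, Units.ext <| by simp [hz]⟩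
  · exact ⟨(Units.mk0 z hz0)⁻¹, Units.ext <| by simp [hz]⟩

noncomputable instance IsAlgClosed.divisibleByAdditiveUnits {K : Type*} [Field K]
    [IsAlgClosed K] : DivisibleBy (Additive Kˣ) ℤ :=
  divisibleByOfSMulRightSurj _ _ fun hn a =>
    let ⟨u, hu⟩ := IsAlgClosed.zpow_surjective_units hn a.toMul
    ⟨Additive.ofMul u, by simp only [← ofMul_zpow, hu, ofMul_toMul]⟩

theorem monomial_hom_surjective_general
    (n m : ℕ)
    (q : Fin m → Fin n → ℤ)
    (hq : LinearIndependent ℚ (fun i : Fin m => fun j : Fin n => (q i j : ℚ))) :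
    Function.Surjective
      (fun (w : Fin n → ℂˣ) (i : Fin m) => ∏ j, (w j) ^ (q i j)) := by
  intro z
  obtain ⟨w, hw⟩ := DivisibleBy.surjective_sum_zsmul (A := Additive ℂˣ) hq.of_intCast_rat
    fun i => Additive.ofMul (z i)
  refine ⟨fun j => (w j).toMul, funext fun i => ?_⟩
  simp_rw [← toMul_zsmul, ← toMul_sum, congrFun hw i]
  rfl

/-- for an integer matrix with rows linearly independent over `ℚ`,
the associated monomial homomorphism `(ℂˣ)^n → (ℂˣ)^m` is surjective. -/
theorem monomial_hom_surjective
    (n m : ℕ) (hm : 1 ≤ m) (hmn : m ≤ n)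
    (q : Fin m → Fin n → ℤ)
    (hq : LinearIndependent ℚ (fun i : Fin m => fun j : Fin n => (q i j : ℚ))) :
    Function.Surjective
      (fun (w : Fin n → ℂˣ) (i : Fin m) => ∏ j, (w j) ^ (q i j)) :=
  monomial_hom_surjective_general n m q hq
end
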